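/- Let {|ψ_j⟩}_{j=1}^2 and {|φ_k⟩}_{k=1}^2 be two orthonormal bases of ℂ², let C ≥ 0, and let C_{kj} be real numbers with 0 ≤ C_{kj} ≤ C for all k, j. Define the 2×2 matrix D = Σ_{k,j} C_{kj} ⟨ψ_j|φ_k⟩ |ψ_j⟩⟨φ_k|. If X is any 2×2 Hermitian matrix with Tr(X) = 0, then |Tr(DX)| ≤ C · ‖X‖₁. -/

import Mathlib

open Matrix ComplexOrder

/-- The trace norm of a complex matrix: the sum of its singular values,
realized as `Tr √(Aᴴ A)`. -/
noncomputable def traceNorm {d : ℕ} (A : Matrix (Fin d) (Fin d) ℂ) : ℝ :=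
  ((((Matrix.posSemidef_conjTranspose_mul_self A).1.eigenvectorUnitary : Matrix (Fin d) (Fin d) ℂ) *
    Matrix.diagonal (fun i => ((Real.sqrt ((Matrix.posSemidef_conjTranspose_mul_self A).1.eigenvalues i) : ℝ) : ℂ)) *
    (star (Matrix.posSemidef_conjTranspose_mul_self A).1.eigenvectorUnitary : Matrix (Fin d) (Fin d) ℂ)).trace).re

/-- Functional calculus for a Hermitian matrix: apply `f` to the eigenvalues in an
orthonormal eigenbasis. -/
noncomputable def matFun {d : ℕ} {A : Matrix (Fin d) (Fin d) ℂ} (hA : A.IsHermitian)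
    (f : ℝ → ℝ) : Matrix (Fin d) (Fin d) ℂ :=
  (hA.eigenvectorUnitary : Matrix (Fin d) (Fin d) ℂ) *
    Matrix.diagonal (fun i => (f (hA.eigenvalues i) : ℂ)) *
    (star hA.eigenvectorUnitary : Matrix (Fin d) (Fin d) ℂ)

/-- `f : (0,∞) → ℝ` is operator monotone decreasing: for all positive definite matrices
`A ≤ B` (Loewner order) of any size, `f(B) ≤ f(A)`. -/
def OpMonoDecrOn (f : ℝ → ℝ) : Prop :=
  ∀ (n : ℕ) (A B : Matrix (Fin n) (Fin n) ℂ) (hA : A.PosDef) (hB : B.PosDef),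
    (B - A).PosSemidef → (matFun hA.1 f - matFun hB.1 f).PosSemidef

/-- The quasi-relative entropy `S_f(ρ‖σ) = Σ_{j,k} λ_j f(μ_k/λ_j) |⟨φ_k|ψ_j⟩|²` computed from
spectral decompositions `ρ = Σ_j λ_j |ψ_j⟩⟨ψ_j|`, `σ = Σ_k μ_k |φ_k⟩⟨φ_k|`. -/
noncomputable def quasiRelEntropy {d : ℕ} (f : ℝ → ℝ) {ρ σ : Matrix (Fin d) (Fin d) ℂ}
    (hρ : ρ.IsHermitian) (hσ : σ.IsHermitian) : ℝ :=
  ∑ j, ∑ k, hρ.eigenvalues j * f (hσ.eigenvalues k / hρ.eigenvalues j) *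
    ‖(inner ℂ (hσ.eigenvectorBasis k) (hρ.eigenvectorBasis j) : ℂ)‖ ^ 2

/-- The Umegaki relative entropy `S(ρ‖σ) = Tr(ρ (log ρ − log σ))`. -/
noncomputable def relEntropy {d : ℕ} {ρ σ : Matrix (Fin d) (Fin d) ℂ}
    (hρ : ρ.IsHermitian) (hσ : σ.IsHermitian) : ℝ :=
  ((ρ * (matFun hρ Real.log - matFun hσ Real.log)).trace).re

/-- The Tsallis relative q-entropy `S_q(ρ‖σ) = (1/(1−q))(1 − Tr(ρ^q σ^{1−q}))`. -/
noncomputable def tsallisEntropy {d : ℕ} (q : ℝ) {ρ σ : Matrix (Fin d) (Fin d) ℂ}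
    (hρ : ρ.IsHermitian) (hσ : σ.IsHermitian) : ℝ :=
  (1 / (1 - q)) *
    (1 - ((matFun hρ (fun x => x ^ q) * matFun hσ (fun x => x ^ (1 - q))).trace).re)

/-!
Write `aₖⱼ = ⟨ψⱼ|φₖ⟩⟨φₖ|X|ψⱼ⟩`, so that `Tr(DX) = Σ Cₖⱼ aₖⱼ`. By completeness of the two bases
`Σ aₖⱼ = Tr X = 0`, hence each `Cₖⱼ` may be replaced by `Cₖⱼ - C/2`, whose modulus is at most
`C/2`. It remains to see `Σ |aₖⱼ| ≤ 2 ‖X‖₁`: expanding `X = Σᵢ λᵢ |uᵢ⟩⟨uᵢ|` gives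
`Σ |aₖⱼ| ≤ Σᵢ |λᵢ| (Σₖ |⟨φₖ|uᵢ⟩|) (Σⱼ |⟨uᵢ|ψⱼ⟩|)`, and by Cauchy–Schwarz and Parseval each of the
two inner sums is at most `√2`.
-/

open scoped InnerProductSpace

section

variable {𝕜 ι n E : Type*} [RCLike 𝕜] [Fintype ι] [Fintype n] [DecidableEq n]

theorem Matrix.trace_vecMulVec_mul (u v : EuclideanSpace 𝕜 n) (X : Matrix n n 𝕜) :
    (vecMulVec (fun a => u a) (fun b => star (v b)) * X).trace = ⟪v, toLpLin 2 2 X u⟫_𝕜 := by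
  simp only [trace, diag, mul_apply, vecMulVec_apply, PiLp.inner_apply, toLpLin_apply,
    mulVec, dotProduct, RCLike.inner_apply, Finset.sum_mul, RCLike.star_def]
  rw [Finset.sum_comm]
  exact Finset.sum_congr rfl fun b _ => Finset.sum_congr rfl fun a _ => by ring

theorem Matrix.sum_sum_inner_mul_inner_toLpLin_eq_trace (X : Matrix n n 𝕜)
    (ψ φ : OrthonormalBasis ι 𝕜 (EuclideanSpace 𝕜 n)) :
    ∑ k, ∑ j, ⟪ψ j, φ k⟫_𝕜 * ⟪φ k, toLpLin 2 2 X (ψ j)⟫_𝕜 = X.trace := by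
  rw [Finset.sum_comm]
  simp only [φ.sum_inner_mul_inner]
  rw [← LinearMap.trace_eq_sum_inner, toLpLin_eq_toLin, Matrix.trace_toLin_eq]

theorem Matrix.IsHermitian.inner_toLpLin_eq_sum {X : Matrix n n 𝕜} (hX : X.IsHermitian)
    (v w : EuclideanSpace 𝕜 n) :
    ⟪v, toLpLin 2 2 X w⟫_𝕜 = ∑ i, (hX.eigenvalues i : 𝕜) *
      ⟪v, hX.eigenvectorBasis i⟫_𝕜 * ⟪hX.eigenvectorBasis i, w⟫_𝕜 := by
  have hXu (i : n) : toLpLin 2 2 X (hX.eigenvectorBasis i) =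
      (hX.eigenvalues i : 𝕜) • hX.eigenvectorBasis i := by
    rw [toLpLin_apply, hX.mulVec_eigenvectorBasis, RCLike.real_smul_eq_coe_smul (K := 𝕜)]
    rfl
  conv_lhs => rw [← hX.eigenvectorBasis.sum_repr' w]
  simp only [map_sum, map_smul, hXu, inner_sum, inner_smul_right]
  exact Finset.sum_congr rfl fun i _ => by ring

theorem Matrix.IsHermitian.trace_cfc {X : Matrix n n 𝕜} (hX : X.IsHermitian) (f : ℝ → ℝ) :
    (cfc f X).trace = ∑ i, (f (hX.eigenvalues i) : 𝕜) := by
  rw [hX.cfc_eq, IsHermitian.cfc, Unitary.conjStarAlgAut_apply, trace_mul_cycle,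
    Unitary.coe_star_mul_self, one_mul, trace_diagonal]
  rfl

variable [NormedAddCommGroup E] [InnerProductSpace 𝕜 E]

theorem OrthonormalBasis.sq_sum_norm_inner_le (b : OrthonormalBasis ι 𝕜 E) (x : E) :
    (∑ i, ‖⟪b i, x⟫_𝕜‖) ^ 2 ≤ Fintype.card ι * ‖x‖ ^ 2 := by
  simpa only [b.sum_sq_norm_inner_right, Finset.card_univ] using
    sq_sum_le_card_mul_sum_sq (s := Finset.univ) (f := fun i => ‖⟪b i, x⟫_𝕜‖)

theorem OrthonormalBasis.sum_norm_inner_mul_sum_norm_inner_le (b b' : OrthonormalBasis ι 𝕜 E)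
    {x : E} (hx : ‖x‖ = 1) :
    (∑ i, ‖⟪b i, x⟫_𝕜‖) * ∑ j, ‖⟪x, b' j⟫_𝕜‖ ≤ Fintype.card ι := by
  have h := b.sq_sum_norm_inner_le x
  have h' := b'.sq_sum_norm_inner_le x
  simp only [hx, one_pow, mul_one, norm_inner_symm x] at h h' ⊢
  nlinarith [sq_nonneg ((∑ i, ‖⟪b i, x⟫_𝕜‖) - ∑ j, ‖⟪b' j, x⟫_𝕜‖)]

theorem Matrix.IsHermitian.sum_sum_norm_inner_mul_inner_toLpLin_le {X : Matrix n n 𝕜}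
    (hX : X.IsHermitian) (ψ φ : OrthonormalBasis ι 𝕜 (EuclideanSpace 𝕜 n)) :
    ∑ k, ∑ j, ‖⟪ψ j, φ k⟫_𝕜 * ⟪φ k, toLpLin 2 2 X (ψ j)⟫_𝕜‖ ≤
      Fintype.card ι * ∑ i, |hX.eigenvalues i| := by
  set u := hX.eigenvectorBasis
  calc ∑ k, ∑ j, ‖⟪ψ j, φ k⟫_𝕜 * ⟪φ k, toLpLin 2 2 X (ψ j)⟫_𝕜‖
      ≤ ∑ k, ∑ j, ∑ i, |hX.eigenvalues i| * ‖⟪φ k, u i⟫_𝕜‖ * ‖⟪u i, ψ j⟫_𝕜‖ := by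
        gcongr with k _ j _
        have hψφ : ‖⟪ψ j, φ k⟫_𝕜‖ ≤ 1 := by
          simpa [ψ.orthonormal.1 j, φ.orthonormal.1 k] using
            norm_inner_le_norm (𝕜 := 𝕜) (ψ j) (φ k)
        rw [norm_mul, hX.inner_toLpLin_eq_sum]
        refine (mul_le_of_le_one_left (norm_nonneg _) hψφ).trans <|
          (norm_sum_le _ _).trans_eq (Finset.sum_congr rfl fun i _ => ?_)
        rw [norm_mul, norm_mul, RCLike.norm_ofReal]
    _ = ∑ i, |hX.eigenvalues i| * ((∑ k, ‖⟪φ k, u i⟫_𝕜‖) * ∑ j, ‖⟪u i, ψ j⟫_𝕜‖) := by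
        simp only [Finset.mul_sum, Finset.sum_mul, mul_assoc]
        rw [Finset.sum_comm]
        exact Finset.sum_comm_cycle
    _ ≤ ∑ i, |hX.eigenvalues i| * Fintype.card ι := by
        gcongr with i
        exact φ.sum_norm_inner_mul_sum_norm_inner_le ψ (u.orthonormal.1 i)
    _ = Fintype.card ι * ∑ i, |hX.eigenvalues i| := by rw [← Finset.sum_mul, mul_comm]

end

theorem norm_sum_smul_le_of_sum_eq_zero {ι E : Type*} [SeminormedAddCommGroup E]
    [NormedSpace ℝ E] {s : Finset ι} {a : ι → E} (ha : ∑ i ∈ s, a i = 0) {c : ι → ℝ} {C : ℝ}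
    (hc : ∀ i ∈ s, 0 ≤ c i ∧ c i ≤ C) :
    ‖∑ i ∈ s, c i • a i‖ ≤ C / 2 * ∑ i ∈ s, ‖a i‖ := by
  have hshift : ∑ i ∈ s, c i • a i = ∑ i ∈ s, (c i - C / 2) • a i := by
    simp only [sub_smul, Finset.sum_sub_distrib, ← Finset.smul_sum, ha, smul_zero, sub_zero]
  calc ‖∑ i ∈ s, c i • a i‖
      ≤ ∑ i ∈ s, |c i - C / 2| * ‖a i‖ := by
        rw [hshift]
        refine (norm_sum_le _ _).trans_eq (Finset.sum_congr rfl fun i _ => ?_)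
        rw [norm_smul, Real.norm_eq_abs]
    _ ≤ ∑ i ∈ s, C / 2 * ‖a i‖ := by
        gcongr with i hi
        obtain ⟨hc₀, hcC⟩ := hc i hi
        exact abs_le.2 ⟨by linarith, by linarith⟩
    _ = C / 2 * ∑ i ∈ s, ‖a i‖ := (Finset.mul_sum _ _ _).symm

theorem traceNorm_eq_re_trace_cfc_sqrt {d : ℕ} (A : Matrix (Fin d) (Fin d) ℂ) :
    traceNorm A = (cfc Real.sqrt (Aᴴ * A)).trace.re := by
  rw [(posSemidef_conjTranspose_mul_self A).1.trace_cfc, traceNorm, trace_mul_cycle,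
    Unitary.coe_star_mul_self, one_mul, trace_diagonal]
  rfl

theorem Matrix.IsHermitian.traceNorm_eq_sum_abs_eigenvalues {d : ℕ}
    {X : Matrix (Fin d) (Fin d) ℂ} (hX : X.IsHermitian) :
    traceNorm X = ∑ i, |hX.eigenvalues i| := by
  have hsqrt : cfc Real.sqrt (Xᴴ * X) = cfc (fun x : ℝ => |x|) X := by
    rw [hX.eq, ← sq, ← cfc_comp_pow (fun x => Real.sqrt x) 2 X (ha := hX.isSelfAdjoint)]
    simp only [Real.sqrt_sq_eq_abs]
  rw [traceNorm_eq_re_trace_cfc_sqrt, hsqrt, hX.trace_cfc]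
  simp

theorem trace_D_mul_hermitian_traceless_le_general
    (ψ φ : OrthonormalBasis (Fin 2) ℂ (EuclideanSpace ℂ (Fin 2)))
    (C : ℝ) (Cm : Fin 2 → Fin 2 → ℝ)
    (hCm : ∀ k j, 0 ≤ Cm k j ∧ Cm k j ≤ C)
    (D : Matrix (Fin 2) (Fin 2) ℂ)
    (hD : D = ∑ k, ∑ j, (Cm k j : ℂ) •
      ((inner ℂ (ψ j) (φ k) : ℂ) • Matrix.vecMulVec (fun a => ψ j a) (fun b => star (φ k b))))
    (X : Matrix (Fin 2) (Fin 2) ℂ) (hX : X.IsHermitian) (hXtr : X.trace = 0) :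
    ‖(D * X).trace‖ ≤ C * traceNorm X := by
  set a : Fin 2 → Fin 2 → ℂ := fun k j => ⟪ψ j, φ k⟫_ℂ * ⟪φ k, toLpLin 2 2 X (ψ j)⟫_ℂ
  have htrace : (D * X).trace = ∑ kj : Fin 2 × Fin 2, Cm kj.1 kj.2 • a kj.1 kj.2 := by
    simp only [hD, Finset.sum_mul, trace_sum, smul_mul, trace_smul, trace_vecMulVec_mul,
      Complex.coe_smul, Fintype.sum_prod_type, a, smul_eq_mul]
  have hsum : ∑ kj : Fin 2 × Fin 2, a kj.1 kj.2 = 0 := by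
    rw [Fintype.sum_prod_type, sum_sum_inner_mul_inner_toLpLin_eq_trace, hXtr]
  have hnorm : ∑ kj : Fin 2 × Fin 2, ‖a kj.1 kj.2‖ ≤ 2 * traceNorm X := by
    rw [Fintype.sum_prod_type, hX.traceNorm_eq_sum_abs_eigenvalues]
    exact_mod_cast hX.sum_sum_norm_inner_mul_inner_toLpLin_le ψ φ
  have hC : 0 ≤ C := (hCm 0 0).1.trans (hCm 0 0).2
  calc ‖(D * X).trace‖ ≤ C / 2 * ∑ kj : Fin 2 × Fin 2, ‖a kj.1 kj.2‖ :=
        htrace ▸ norm_sum_smul_le_of_sum_eq_zero hsum fun kj _ => hCm kj.1 kj.2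
    _ ≤ C / 2 * (2 * traceNorm X) := by gcongr
    _ = C * traceNorm X := by ring

/-- Lemma, 2×2 Hermitian traceless case. For
`D = Σ_{k,j} C_{kj} ⟨ψ_j|φ_k⟩ |ψ_j⟩⟨φ_k|` with `0 ≤ C_{kj} ≤ C` and `X` a 2×2 Hermitian
traceless matrix, `|Tr(DX)| ≤ C ‖X‖₁`. -/
theorem trace_D_mul_hermitian_traceless_le
    (ψ φ : OrthonormalBasis (Fin 2) ℂ (EuclideanSpace ℂ (Fin 2)))
    (C : ℝ) (hC : 0 ≤ C) (Cm : Fin 2 → Fin 2 → ℝ)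
    (hCm : ∀ k j, 0 ≤ Cm k j ∧ Cm k j ≤ C)
    (D : Matrix (Fin 2) (Fin 2) ℂ)
    (hD : D = ∑ k, ∑ j, (Cm k j : ℂ) •
      ((inner ℂ (ψ j) (φ k) : ℂ) • Matrix.vecMulVec (fun a => ψ j a) (fun b => star (φ k b))))
    (X : Matrix (Fin 2) (Fin 2) ℂ) (hX : X.IsHermitian) (hXtr : X.trace = 0) :
    ‖(D * X).trace‖ ≤ C * traceNorm X :=
  trace_D_mul_hermitian_traceless_le_general ψ φ C Cm hCm D hD X hX hXtr
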